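/- arXiv:1505.03097 — 2 statements merged into one kernel-verified Lean document; each statement's English description precedes it below -/
import Mathlib

section
/- Let u ≥ 1 be an integer and let a > 0, b ≥ 0 be real. Then Q_{u+1}(a, b) − Q_u(a, b) = (b/a)^u · e^{−(a²+b²)/2} · I_u(ab), where I_u is the modified Bessel function of the first kind of order u. -/
open MeasureTheory

/-- The generalized Marcum Q-function of integer order `u ≥ 1`. -/
noncomputable def marcumQ (u : ℕ) (a b : ℝ) : ℝ :=
  ∑' n : ℕ, Real.exp (-a ^ 2 / 2) * (a ^ 2 / 2) ^ n / n.factorial *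
    ((1 / Real.Gamma (n + u)) *
      ∫ t in Set.Ioi (b ^ 2 / 2), t ^ ((n : ℝ) + u - 1) * Real.exp (-t))

/-- The modified Bessel function of the first kind of order `u`:
`I_u(x) = Σ_{k=0}^∞ (x/2)^{2k+u} / (k! · Γ(k+u+1))`. -/
noncomputable def besselI (u : ℕ) (x : ℝ) : ℝ :=
  ∑' k : ℕ, (x / 2) ^ (2 * k + u) / (k.factorial * Real.Gamma (k + u + 1))

/-!
The upper incomplete gamma function satisfies `Γ(s+1, x) = s Γ(s, x) + x^s e^{-x}` (integration
by parts), so each regularized term of `Q_{u+1}` exceeds the corresponding term of `Q_u` by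
`x^{n+u} e^{-x} / Γ(n+u+1)` with `x = b²/2`. Multiplied by the Poisson weight this is exactly the
`n`-th term of `(b/a)^u e^{-(a²+b²)/2} I_u(ab)`.
-/

open Set Filter Real Topology

noncomputable def upperIncompleteGamma (s x : ℝ) : ℝ :=
  ∫ t in Ioi x, t ^ (s - 1) * exp (-t)

section UpperIncompleteGamma

variable {s x : ℝ}

lemma integrableOn_rpow_mul_exp_neg_Ioi (hs : 0 < s) (hx : 0 ≤ x) :
    IntegrableOn (fun t : ℝ => t ^ (s - 1) * exp (-t)) (Ioi x) := by
  simpa only [mul_comm] using (GammaIntegral_convergent hs).mono_set (Ioi_subset_Ioi hx)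

lemma upperIncompleteGamma_nonneg (hx : 0 ≤ x) : 0 ≤ upperIncompleteGamma s x :=
  setIntegral_nonneg measurableSet_Ioi fun _ ht =>
    mul_nonneg (rpow_nonneg (hx.trans ht.le) _) (exp_pos _).le

lemma upperIncompleteGamma_le_Gamma (hs : 0 < s) (hx : 0 ≤ x) :
    upperIncompleteGamma s x ≤ Gamma s := by
  rw [Gamma_eq_integral hs]
  simp_rw [mul_comm (exp _)]
  refine setIntegral_mono_set (integrableOn_rpow_mul_exp_neg_Ioi hs le_rfl) ?_
    (Eventually.of_forall (Ioi_subset_Ioi hx))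
  exact (ae_restrict_iff' measurableSet_Ioi).2 <| Eventually.of_forall fun t ht =>
    mul_nonneg (rpow_nonneg ht.le _) (exp_pos _).le

lemma upperIncompleteGamma_add_one (hs : 0 < s) (hx : 0 ≤ x) :
    upperIncompleteGamma (s + 1) x = s * upperIncompleteGamma s x + x ^ s * exp (-x) := by
  have hint₁ : IntegrableOn (fun t : ℝ => t ^ s * exp (-t)) (Ioi x) := by
    simpa using integrableOn_rpow_mul_exp_neg_Ioi (s := s + 1) (by linarith) hx
  have hint₂ := (integrableOn_rpow_mul_exp_neg_Ioi hs hx).const_mul s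
  have hderiv : ∀ t ∈ Ioi x, HasDerivAt (fun t => -(t ^ s * exp (-t)))
      (t ^ s * exp (-t) - s * (t ^ (s - 1) * exp (-t))) t := by
    intro t ht
    have hpow := hasDerivAt_rpow_const (p := s) (Or.inl (hx.trans_lt ht).ne')
    have hexp : HasDerivAt (fun t => exp (-t)) (-exp (-t)) t := by
      simpa using (hasDerivAt_neg t).exp
    exact (hpow.mul hexp).neg.congr_deriv (by ring)
  have hcont : ContinuousWithinAt (fun t => -(t ^ s * exp (-t))) (Ici x) x :=
    ((continuousAt_rpow_const x s (Or.inr hs.le)).mul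
      (continuous_exp.comp continuous_neg).continuousAt).neg.continuousWithinAt
  have hlim : Tendsto (fun t => -(t ^ s * exp (-t))) atTop (𝓝 0) := by
    simpa using (tendsto_rpow_mul_exp_neg_mul_atTop_nhds_zero s 1 one_pos).neg
  have key := integral_Ioi_of_hasDerivAt_of_tendsto hcont hderiv (hint₁.sub hint₂) hlim
  rw [integral_sub hint₁ hint₂, integral_const_mul] at key
  simp only [upperIncompleteGamma, add_sub_cancel_right]
  linarith

lemma one_div_Gamma_mul_upperIncompleteGamma_mem_Icc (hs : 0 < s) (hx : 0 ≤ x) :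
    1 / Gamma s * upperIncompleteGamma s x ∈ Icc 0 1 := by
  have hΓ := Gamma_pos_of_pos hs
  rw [one_div_mul_eq_div]
  exact ⟨div_nonneg (upperIncompleteGamma_nonneg hx) hΓ.le,
    (div_le_one hΓ).2 (upperIncompleteGamma_le_Gamma hs hx)⟩

lemma one_div_Gamma_mul_upperIncompleteGamma_succ_sub (hs : 0 < s) (hx : 0 ≤ x) :
    1 / Gamma (s + 1) * upperIncompleteGamma (s + 1) x - 1 / Gamma s * upperIncompleteGamma s x
      = x ^ s * exp (-x) / Gamma (s + 1) := by
  have hΓ : Gamma s ≠ 0 := (Gamma_pos_of_pos hs).ne'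
  rw [upperIncompleteGamma_add_one hs hx, Gamma_add_one hs.ne']
  field_simp
  ring

end UpperIncompleteGamma

lemma marcumQ_eq_tsum (u : ℕ) (a b : ℝ) :
    marcumQ u a b = ∑' n : ℕ, exp (-a ^ 2 / 2) * (a ^ 2 / 2) ^ n / n.factorial *
      (1 / Gamma (n + u) * upperIncompleteGamma (n + u) (b ^ 2 / 2)) :=
  rfl

lemma summable_marcumQ_terms {u : ℕ} (hu : 1 ≤ u) (a b : ℝ) :
    Summable fun n : ℕ => exp (-a ^ 2 / 2) * (a ^ 2 / 2) ^ n / n.factorial *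
      (1 / Gamma (n + u) * upperIncompleteGamma (n + u) (b ^ 2 / 2)) := by
  have hreg (n : ℕ) := one_div_Gamma_mul_upperIncompleteGamma_mem_Icc
    (s := n + u) (x := b ^ 2 / 2) (by positivity) (by positivity)
  refine Summable.of_nonneg_of_le (fun n => ?_) (fun n => ?_)
    ((summable_pow_div_factorial (a ^ 2 / 2)).mul_left (exp (-a ^ 2 / 2)))
  · have := (hreg n).1
    positivity
  · calc _ ≤ exp (-a ^ 2 / 2) * (a ^ 2 / 2) ^ n / n.factorial * 1 := by gcongr; exact (hreg n).2
      _ = exp (-a ^ 2 / 2) * ((a ^ 2 / 2) ^ n / n.factorial) := by ring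

lemma poisson_mul_pow_exp_div_Gamma {a : ℝ} (ha : a ≠ 0) (b : ℝ) (u n : ℕ) :
    exp (-a ^ 2 / 2) * (a ^ 2 / 2) ^ n / n.factorial *
        ((b ^ 2 / 2) ^ (n + u) * exp (-(b ^ 2 / 2)) / Gamma (n + u + 1))
      = (b / a) ^ u * exp (-(a ^ 2 + b ^ 2) / 2) *
        ((a * b / 2) ^ (2 * n + u) / (n.factorial * Gamma (n + u + 1))) := by
  rw [show -(a ^ 2 + b ^ 2) / 2 = -a ^ 2 / 2 + -(b ^ 2 / 2) by ring, exp_add, div_pow b a]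
  field_simp
  ring

theorem marcumQ_succ_sub_general (u : ℕ) (hu : 1 ≤ u) (a b : ℝ) (ha : 0 < a) :
    marcumQ (u + 1) a b - marcumQ u a b
      = (b / a) ^ u * Real.exp (-(a ^ 2 + b ^ 2) / 2) * besselI u (a * b) := by
  rw [marcumQ_eq_tsum, marcumQ_eq_tsum,
    ← (summable_marcumQ_terms (Nat.le_succ_of_le hu) a b).tsum_sub (summable_marcumQ_terms hu a b),
    besselI, ← tsum_mul_left]
  refine tsum_congr fun n => ?_
  have hs : (0 : ℝ) < n + u := by positivity
  rw [← mul_sub, Nat.cast_succ, ← add_assoc,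
    one_div_Gamma_mul_upperIncompleteGamma_succ_sub hs (by positivity),
    ← Nat.cast_add, rpow_natCast, Nat.cast_add]
  exact poisson_mul_pow_exp_div_Gamma ha.ne' b u n

/-- Recurrence for the Marcum Q-function:
`Q_{u+1}(a, b) − Q_u(a, b) = (b/a)^u e^{−(a²+b²)/2} I_u(ab)`. -/
theorem marcumQ_succ_sub (u : ℕ) (hu : 1 ≤ u) (a b : ℝ) (ha : 0 < a) (hb : 0 ≤ b) :
    marcumQ (u + 1) a b - marcumQ u a b
      = (b / a) ^ u * Real.exp (-(a ^ 2 + b ^ 2) / 2) * besselI u (a * b) :=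
  marcumQ_succ_sub_general u hu a b ha
end

section
/- Let u ≥ 1 be an integer and let b, c, k > 0 be real. Then for every y > 0, the function y ↦ Q_u(b√(y/k), c) is differentiable at y with derivative (d/dy) Q_u(b√(y/k), c) = (b²/(2k)) · c^u · (b√(y/k))^{−u} · e^{−(b² y/k + c²)/2} · I_u(b c √(y/k)), where I_u is the modified Bessel function of the first kind of order u. -/
open MeasureTheory

/-!
With `q = a² / 2`, `Q_u(a, c)` is the mean of `P (N + u)` for `N ~ Poisson(q)`, where
`P s = Γ(s, c²/2) / Γ(s)` is the regularized upper incomplete gamma function. Differentiating a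
Poisson mean in its rate gives the Poisson mean of the forward difference, and integration by parts
gives `P (s + 1) - P s = x ^ s e^{-x} / Γ(s + 1)` with `x = c² / 2`. The Poisson mean of these
increments is, term by term, the power series of `c^u a^{-u} e^{-(a² + c²)/2} I_u(a c)`. The chain
rule through `q = b² y / (2k)` supplies the factor `b² / (2k)`.
-/

open Real Set Filter Topology Nat

noncomputable def regularizedUpperGamma (s x : ℝ) : ℝ :=
  1 / Gamma s * ∫ t in Ioi x, t ^ (s - 1) * exp (-t)

section RegularizedUpperGamma

variable {s x : ℝ}

lemma integrableOn_rpow_mul_exp_neg (hs : 0 < s) (hx : 0 ≤ x) :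
    IntegrableOn (fun t => t ^ (s - 1) * exp (-t)) (Ioi x) := by
  simp_rw [mul_comm _ (exp _)]
  exact (GammaIntegral_convergent hs).mono_set (Ioi_subset_Ioi hx)

lemma integral_rpow_mul_exp_neg_nonneg (hx : 0 ≤ x) :
    0 ≤ ∫ t in Ioi x, t ^ (s - 1) * exp (-t) :=
  setIntegral_nonneg measurableSet_Ioi fun _ ht =>
    mul_nonneg (rpow_nonneg (hx.trans ht.le) _) (exp_pos _).le

lemma integral_rpow_mul_exp_neg_le_Gamma (hs : 0 < s) (hx : 0 ≤ x) :
    ∫ t in Ioi x, t ^ (s - 1) * exp (-t) ≤ Gamma s := by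
  rw [Gamma_eq_integral hs]
  simp_rw [mul_comm (exp _)]
  refine setIntegral_mono_set (integrableOn_rpow_mul_exp_neg hs le_rfl) ?_
    (Ioi_subset_Ioi hx).eventuallyLE
  filter_upwards [self_mem_ae_restrict measurableSet_Ioi] with t ht
  exact mul_nonneg (rpow_nonneg (le_of_lt ht) _) (exp_pos _).le

lemma abs_regularizedUpperGamma_le_one (hs : 0 < s) (hx : 0 ≤ x) :
    |regularizedUpperGamma s x| ≤ 1 := by
  have hΓ := Gamma_pos_of_pos hs
  have hI := integral_rpow_mul_exp_neg_nonneg (s := s) hx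
  rw [regularizedUpperGamma, abs_of_nonneg (by positivity), one_div, inv_mul_le_one₀ hΓ]
  exact integral_rpow_mul_exp_neg_le_Gamma hs hx

lemma integral_rpow_mul_exp_neg_add_one (hs : 0 < s) (hx : 0 ≤ x) :
    ∫ t in Ioi x, t ^ s * exp (-t)
      = s * (∫ t in Ioi x, t ^ (s - 1) * exp (-t)) + x ^ s * exp (-x) := by
  have hcont : ContinuousWithinAt (fun t => -(t ^ s * exp (-t))) (Ici x) x :=
    ((continuousAt_rpow_const x s (Or.inr hs.le)).mul
      (continuous_exp.comp continuous_neg).continuousAt).neg.continuousWithinAt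
  have hderiv : ∀ t ∈ Ioi x, HasDerivAt (fun t => -(t ^ s * exp (-t)))
      (t ^ s * exp (-t) - s * (t ^ (s - 1) * exp (-t))) t := by
    intro t ht
    have ht0 : t ≠ 0 := (hx.trans_lt ht).ne'
    exact (((hasDerivAt_rpow_const (Or.inl ht0)).mul (hasDerivAt_id t).neg.exp).neg).congr_deriv
      (by simp only [Pi.neg_apply, id]; ring)
  have hint := (integrableOn_rpow_mul_exp_neg (s := s + 1) (by linarith) hx)
  simp only [add_sub_cancel_right] at hint
  have hlim : Tendsto (fun t => -(t ^ s * exp (-t))) atTop (𝓝 0) := by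
    simpa using (tendsto_rpow_mul_exp_neg_mul_atTop_nhds_zero s 1 one_pos).neg
  have h := integral_Ioi_of_hasDerivAt_of_tendsto hcont hderiv
    (hint.sub ((integrableOn_rpow_mul_exp_neg hs hx).const_mul s)) hlim
  rw [integral_sub hint ((integrableOn_rpow_mul_exp_neg hs hx).const_mul s),
    integral_const_mul] at h
  linarith

lemma regularizedUpperGamma_add_one (hs : 0 < s) (hx : 0 ≤ x) :
    regularizedUpperGamma (s + 1) x
      = regularizedUpperGamma s x + x ^ s * exp (-x) / Gamma (s + 1) := by
  rw [regularizedUpperGamma, regularizedUpperGamma, add_sub_cancel_right,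
    integral_rpow_mul_exp_neg_add_one hs hx, Gamma_add_one hs.ne']
  have := (Gamma_pos_of_pos hs).ne'
  field_simp

end RegularizedUpperGamma

noncomputable def poissonMean (A : ℕ → ℝ) (q : ℝ) : ℝ :=
  ∑' n, exp (-q) * q ^ n / n ! * A n

section PoissonMean

variable {A : ℕ → ℝ} {C : ℝ}

lemma succ_mul_pow_div_factorial_succ (x : ℝ) (m : ℕ) :
    ((m + 1 : ℕ) : ℝ) * x ^ m / (m + 1)! = x ^ m / m ! := by
  rw [factorial_succ, cast_mul]
  have : ((m + 1 : ℕ) : ℝ) ≠ 0 := by positivity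
  field_simp

lemma summable_pow_div_factorial_mul (hA : ∀ n, ‖A n‖ ≤ C) (q : ℝ) :
    Summable fun n => q ^ n / n ! * A n := by
  refine ((summable_pow_div_factorial |q|).mul_right C).of_norm_bounded fun n => ?_
  rw [norm_mul, norm_div, norm_pow, norm_natCast, norm_eq_abs]
  gcongr
  exact hA n

lemma summable_mul_pow_pred_div_factorial (R : ℝ) :
    Summable fun n : ℕ => (n : ℝ) * R ^ (n - 1) / n ! := by
  rw [← summable_nat_add_iff 1]
  simpa only [add_tsub_cancel_right, succ_mul_pow_div_factorial_succ]
    using summable_pow_div_factorial R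

lemma hasDerivAt_tsum_pow_div_factorial_mul (hA : ∀ n, ‖A n‖ ≤ C) (q : ℝ) :
    HasDerivAt (fun z => ∑' n, z ^ n / n ! * A n) (∑' n, q ^ n / n ! * A (n + 1)) q := by
  set R := |q| + 1
  have hbound : ∀ n : ℕ, ∀ z ∈ Ioo (-R) R, ‖(n : ℝ) * z ^ (n - 1) / n ! * A n‖
      ≤ (n : ℝ) * R ^ (n - 1) / n ! * C := by
    intro n z hz
    rw [norm_mul, norm_div, norm_mul, norm_pow, norm_natCast, norm_natCast, norm_eq_abs]
    gcongr
    · exact (abs_lt.mpr hz).le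
    · exact hA n
  have hsum := (summable_mul_pow_pred_div_factorial R).mul_right C
  have hq : q ∈ Ioo (-R) R := abs_lt.mp (by linarith)
  have hderiv : HasDerivAt (fun z => ∑' n, z ^ n / n ! * A n)
      (∑' n : ℕ, (n : ℝ) * q ^ (n - 1) / n ! * A n) q :=
    hasDerivAt_tsum_of_isPreconnected (g' := fun (n : ℕ) z => (n : ℝ) * z ^ (n - 1) / n ! * A n)
      hsum isOpen_Ioo (convex_Ioo _ _).isPreconnected
      (fun n z _ => ((hasDerivAt_pow n z).div_const (n ! : ℝ)).mul_const (A n)) hbound hq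
      (summable_pow_div_factorial_mul hA q) hq
  refine hderiv.congr_deriv ?_
  have hsum' : Summable fun n : ℕ => (n : ℝ) * q ^ (n - 1) / n ! * A n :=
    hsum.of_norm_bounded fun n => hbound n q hq
  rw [hsum'.tsum_eq_zero_add]
  simp only [CharP.cast_eq_zero, zero_mul, zero_div, zero_add, add_tsub_cancel_right,
    succ_mul_pow_div_factorial_succ]

lemma poissonMean_eq_exp_mul_tsum (A : ℕ → ℝ) (q : ℝ) :
    poissonMean A q = exp (-q) * ∑' n, q ^ n / n ! * A n := by
  rw [poissonMean, ← tsum_mul_left]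
  exact tsum_congr fun n => by ring

lemma hasDerivAt_poissonMean (hA : ∀ n, ‖A n‖ ≤ C) (q : ℝ) :
    HasDerivAt (poissonMean A) (poissonMean (fun n => A (n + 1) - A n) q) q := by
  have hS := hasDerivAt_tsum_pow_div_factorial_mul hA q
  rw [funext (poissonMean_eq_exp_mul_tsum A), poissonMean_eq_exp_mul_tsum]
  refine ((hasDerivAt_neg q).exp.mul hS).congr_deriv ?_
  simp only [mul_sub]
  rw [(summable_pow_div_factorial_mul (fun n => hA (n + 1)) q).tsum_sub
    (summable_pow_div_factorial_mul hA q)]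
  ring

end PoissonMean

lemma marcumQ_eq_poissonMean (u : ℕ) (a c : ℝ) :
    marcumQ u a c
      = poissonMean (fun n => regularizedUpperGamma (n + u) (c ^ 2 / 2)) (a ^ 2 / 2) := by
  simp only [marcumQ, poissonMean, regularizedUpperGamma, neg_div]

lemma hasDerivAt_poissonMean_regularizedUpperGamma {u : ℕ} (hu : 1 ≤ u) {x : ℝ} (hx : 0 ≤ x)
    (q : ℝ) :
    HasDerivAt (poissonMean fun n => regularizedUpperGamma (n + u) x)
      (poissonMean (fun n => x ^ ((n : ℝ) + u) * exp (-x) / Gamma (n + u + 1)) q) q := by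
  have hpos : ∀ n : ℕ, (0 : ℝ) < n + u := fun n => by positivity
  refine (hasDerivAt_poissonMean (fun n => abs_regularizedUpperGamma_le_one (hpos n) hx)
    q).congr_deriv ?_
  congr 1 with n
  rw [cast_succ, add_right_comm, regularizedUpperGamma_add_one (hpos n) hx]
  ring

lemma poissonMean_eq_besselI (u : ℕ) {a : ℝ} (ha : 0 < a) (c : ℝ) :
    poissonMean (fun n => (c ^ 2 / 2) ^ ((n : ℝ) + u) * exp (-(c ^ 2 / 2)) / Gamma (n + u + 1))
        (a ^ 2 / 2)
      = c ^ u * a ^ (-(u : ℝ)) * exp (-(a ^ 2 + c ^ 2) / 2) * besselI u (a * c) := by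
  rw [poissonMean, besselI, ← tsum_mul_left]
  refine tsum_congr fun n => ?_
  rw [← cast_add, rpow_natCast, rpow_neg ha.le, rpow_natCast,
    show -(a ^ 2 + c ^ 2) / 2 = -(a ^ 2 / 2) + -(c ^ 2 / 2) by ring, exp_add]
  have := ha.ne'
  field_simp
  ring

theorem hasDerivAt_marcumQ_sqrt_general (u : ℕ) (hu : 1 ≤ u) (b c k : ℝ)
    (hb : 0 < b) (hk : 0 < k) (y : ℝ) (hy : 0 < y) :
    HasDerivAt (fun y => marcumQ u (b * Real.sqrt (y / k)) c)
      (b ^ 2 / (2 * k) * c ^ u * (b * Real.sqrt (y / k)) ^ (-(u : ℝ)) *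
        Real.exp (-(b ^ 2 * y / k + c ^ 2) / 2) * besselI u (b * c * Real.sqrt (y / k))) y := by
  have hsq : ∀ z > 0, (b * √(z / k)) ^ 2 / 2 = b ^ 2 / (2 * k) * z := fun z hz => by
    rw [mul_pow, sq_sqrt (by positivity)]
    ring
  have hQ : (fun z => marcumQ u (b * √(z / k)) c) =ᶠ[𝓝 y]
      (poissonMean fun n => regularizedUpperGamma (n + u) (c ^ 2 / 2)) ∘ (b ^ 2 / (2 * k) * ·) :=
    eventually_of_mem (Ioi_mem_nhds hy) fun z hz => by
      rw [Function.comp_apply, ← hsq z hz, ← marcumQ_eq_poissonMean]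
  have hderiv := (hasDerivAt_poissonMean_regularizedUpperGamma hu (x := c ^ 2 / 2)
    (by positivity) _).comp y ((hasDerivAt_id' y).const_mul (b ^ 2 / (2 * k)))
  rw [mul_one, ← hsq y hy, poissonMean_eq_besselI u (by positivity)] at hderiv
  refine (hderiv.congr_of_eventuallyEq hQ).congr_deriv ?_
  rw [mul_right_comm b, mul_pow, sq_sqrt (by positivity), ← mul_div_assoc (b ^ 2) y k]
  ring

/-- Derivative of `y ↦ Q_u(b√(y/k), c)` for `y > 0`:
`(d/dy) Q_u(b√(y/k), c) = (b²/(2k)) c^u (b√(y/k))^{−u} e^{−(b²y/k + c²)/2} I_u(bc√(y/k))`. -/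
theorem hasDerivAt_marcumQ_sqrt (u : ℕ) (hu : 1 ≤ u) (b c k : ℝ)
    (hb : 0 < b) (hc : 0 < c) (hk : 0 < k) (y : ℝ) (hy : 0 < y) :
    HasDerivAt (fun y => marcumQ u (b * Real.sqrt (y / k)) c)
      (b ^ 2 / (2 * k) * c ^ u * (b * Real.sqrt (y / k)) ^ (-(u : ℝ)) *
        Real.exp (-(b ^ 2 * y / k + c ^ 2) / 2) * besselI u (b * c * Real.sqrt (y / k))) y :=
  hasDerivAt_marcumQ_sqrt_general u hu b c k hb hk y hy
end
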